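/- arXiv:1904.08112 — 5 statements merged into one kernel-verified Lean document; each statement's English description precedes it below -/
import Mathlib

section
/- Let S be a t-daisy over universe [n] with kernel K and petals of size at most s where s ≥ 2, such that the union of all sets in S has cardinality at least c·n. Then there exists a sub-collection S₀ ⊆ S whose petals {T\K : T ∈ S₀} are pairwise disjoint, with |S₀| ≥ (c·n − |K|)/(t·s²). -/
/-- simple daisy lemma, case of petals of size at most s, s ≥ 2. -/
theorem simple_daisy_lemma
    (n t s : ℕ) (c : ℝ) (hs : 2 ≤ s)
    (S : Finset (Finset (Fin n))) (K : Finset (Fin n))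
    (hdaisy : ∀ u : Fin n, u ∉ K → (S.filter (fun T => u ∈ T \ K)).card ≤ t)
    (hpetal : ∀ T ∈ S, (T \ K).card ≤ s)
    (hcover : c * n ≤ ((S.biUnion id).card : ℝ)) :
    ∃ S₀ ⊆ S,
      (∀ T₁ ∈ S₀, ∀ T₂ ∈ S₀, T₁ ≠ T₂ → Disjoint (T₁ \ K) (T₂ \ K)) ∧
      (c * n - K.card) / (t * s ^ 2) ≤ (S₀.card : ℝ) := by
  classical
  by_cases hc : c * n - K.card ≤ 0
  · refine ⟨∅, Finset.empty_subset _, by simp, ?_⟩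
    simp only [Finset.card_empty, Nat.cast_zero]
    apply div_nonpos_of_nonpos_of_nonneg hc
    positivity
  push_neg at hc
  by_cases ht : t = 0
  · exfalso
    have hsub : S.biUnion id ⊆ K := by
      intro u hu
      by_contra hK
      have h0 := hdaisy u hK
      simp only [ht, Nat.le_zero, Finset.card_eq_zero, Finset.filter_eq_empty_iff] at h0
      obtain ⟨T, hT, huT⟩ := Finset.mem_biUnion.mp hu
      exact h0 hT (Finset.mem_sdiff.mpr ⟨huT, hK⟩)
    have h1 := Finset.card_le_card hsub
    have h2 : ((S.biUnion id).card : ℝ) ≤ K.card := by exact_mod_cast h1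
    linarith
  -- main case : pick a maximal S₀ ⊆ S with pairwise disjoint petals
  set pred : Finset (Finset (Fin n)) → Prop :=
    fun A => ∀ T₁ ∈ A, ∀ T₂ ∈ A, T₁ ≠ T₂ → Disjoint (T₁ \ K) (T₂ \ K) with hpred
  have hne : (S.powerset.filter pred).Nonempty :=
    ⟨∅, by simp [pred]⟩
  obtain ⟨S₀, hS₀mem, hmax⟩ : ∃ m ∈ S.powerset.filter pred, ∀ x ∈ S.powerset.filter pred, ¬ m < x := by
    obtain ⟨m, hm⟩ := (S.powerset.filter pred).exists_maximal hne
    exact ⟨m, hm.prop, fun x hx hlt => not_le_of_gt hlt (hm.2 hx hlt.le)⟩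
  rw [Finset.mem_filter, Finset.mem_powerset] at hS₀mem
  obtain ⟨hS₀S, hS₀disj⟩ := hS₀mem
  refine ⟨S₀, hS₀S, hS₀disj, ?_⟩
  set P := S₀.biUnion (fun T => T \ K) with hP
  -- maximality consequence: every nonempty petal meets P
  have hkey : ∀ T ∈ S, (T \ K).Nonempty → ((T \ K) ∩ P).Nonempty := by
    intro T hT hTne
    by_contra hint
    rw [Finset.not_nonempty_iff_eq_empty] at hint
    have hdisjP : Disjoint (T \ K) P := by
      rw [Finset.disjoint_iff_inter_eq_empty]; exact hint
    have hTnot : T ∉ S₀ := by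
      intro hTin
      have hsubP : T \ K ⊆ P := Finset.subset_biUnion_of_mem (fun T => T \ K) hTin
      obtain ⟨x, hx⟩ := hTne
      exact (Finset.disjoint_left.mp hdisjP hx) (hsubP hx)
    have hins : insert T S₀ ∈ S.powerset.filter pred := by
      rw [Finset.mem_filter, Finset.mem_powerset]
      refine ⟨Finset.insert_subset hT hS₀S, ?_⟩
      intro T₁ h₁ T₂ h₂ hne12
      rcases Finset.mem_insert.mp h₁ with h₁' | h₁'
      · rcases Finset.mem_insert.mp h₂ with h₂' | h₂'
        · exact absurd (h₁'.trans h₂'.symm) hne12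
        · subst h₁'
          exact hdisjP.mono_right (Finset.subset_biUnion_of_mem (fun T => T \ K) h₂')
      · rcases Finset.mem_insert.mp h₂ with h₂' | h₂'
        · subst h₂'
          exact (hdisjP.mono_right (Finset.subset_biUnion_of_mem (fun T => T \ K) h₁')).symm
        · exact hS₀disj T₁ h₁' T₂ h₂' hne12
    exact hmax _ hins (Finset.ssubset_insert hTnot)
  -- counting
  have hsub : S.biUnion (fun T => T \ K) ⊆
      P.biUnion (fun v => (S.filter (fun T => v ∈ T \ K)).biUnion (fun T => T \ K)) := by
    intro u hu
    obtain ⟨T, hT, huT⟩ := Finset.mem_biUnion.mp hu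
    obtain ⟨v, hv⟩ := hkey T hT ⟨u, huT⟩
    rw [Finset.mem_inter] at hv
    exact Finset.mem_biUnion.mpr ⟨v, hv.2,
      Finset.mem_biUnion.mpr ⟨T, Finset.mem_filter.mpr ⟨hT, hv.1⟩, huT⟩⟩
  have hPnotK : ∀ v ∈ P, v ∉ K := by
    intro v hv
    obtain ⟨T, _, hvT⟩ := Finset.mem_biUnion.mp hv
    exact (Finset.mem_sdiff.mp hvT).2
  have hinner : ∀ v ∈ P,
      ((S.filter (fun T => v ∈ T \ K)).biUnion (fun T => T \ K)).card ≤ t * s := by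
    intro v hv
    calc ((S.filter (fun T => v ∈ T \ K)).biUnion (fun T => T \ K)).card
        ≤ ∑ T ∈ S.filter (fun T => v ∈ T \ K), (T \ K).card :=
          Finset.card_biUnion_le
      _ ≤ ∑ T ∈ S.filter (fun T => v ∈ T \ K), s :=
          Finset.sum_le_sum (fun T hT => hpetal T (Finset.mem_filter.mp hT).1)
      _ = (S.filter (fun T => v ∈ T \ K)).card * s := by
          rw [Finset.sum_const, smul_eq_mul]
      _ ≤ t * s := Nat.mul_le_mul_right s (hdaisy v (hPnotK v hv))
  have h1 : (S.biUnion (fun T => T \ K)).card ≤ P.card * (t * s) := by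
    calc (S.biUnion (fun T => T \ K)).card
        ≤ (P.biUnion (fun v => (S.filter (fun T => v ∈ T \ K)).biUnion (fun T => T \ K))).card :=
          Finset.card_le_card hsub
      _ ≤ ∑ v ∈ P, ((S.filter (fun T => v ∈ T \ K)).biUnion (fun T => T \ K)).card :=
          Finset.card_biUnion_le
      _ ≤ ∑ v ∈ P, t * s := Finset.sum_le_sum hinner
      _ = P.card * (t * s) := by rw [Finset.sum_const, smul_eq_mul]
  have h2 : P.card ≤ S₀.card * s := by
    calc P.card ≤ ∑ T ∈ S₀, (T \ K).card := Finset.card_biUnion_le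
      _ ≤ ∑ T ∈ S₀, s := Finset.sum_le_sum (fun T hT => hpetal T (hS₀S hT))
      _ = S₀.card * s := by rw [Finset.sum_const, smul_eq_mul]
  have h3 : (S.biUnion id).card ≤ K.card + (S.biUnion (fun T => T \ K)).card := by
    have hsub2 : S.biUnion id ⊆ K ∪ S.biUnion (fun T => T \ K) := by
      intro u hu
      obtain ⟨T, hT, huT⟩ := Finset.mem_biUnion.mp hu
      by_cases hK : u ∈ K
      · exact Finset.mem_union_left _ hK
      · exact Finset.mem_union_right _
          (Finset.mem_biUnion.mpr ⟨T, hT, Finset.mem_sdiff.mpr ⟨huT, hK⟩⟩)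
    exact (Finset.card_le_card hsub2).trans (Finset.card_union_le _ _)
  have htotal : (S.biUnion id).card ≤ K.card + S₀.card * (t * s ^ 2) := by
    calc (S.biUnion id).card
        ≤ K.card + S₀.card * s * (t * s) :=
          h3.trans (Nat.add_le_add_left (h1.trans (Nat.mul_le_mul_right _ h2)) _)
      _ = K.card + S₀.card * (t * s ^ 2) := by ring
  have hreal : c * n ≤ (K.card : ℝ) + S₀.card * (t * s ^ 2) := by
    have hcast : ((S.biUnion id).card : ℝ) ≤ (K.card : ℝ) + S₀.card * (t * s ^ 2) := by
      exact_mod_cast htotal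
    linarith
  have htpos : (0:ℝ) < t := by exact_mod_cast Nat.pos_of_ne_zero ht
  have hspos : (0:ℝ) < s := by
    have : 0 < s := by omega
    exact_mod_cast this
  have hd : (0:ℝ) < t * s ^ 2 := by positivity
  rw [div_le_iff₀ hd]
  linarith
end

section
/- Let T be a collection of c·n subsets of [n], each of size ℓ, and let μ be a probability distribution on subsets of [n] whose support is T. Then there exist s ∈ [ℓ] and a sub-collection S ⊆ T such that: (1) S is a (c·n^{m/ℓ})-daisy with kernel K where m = max{1, s−1}; (2) |K| ≤ ℓ·n^{1−s/ℓ}; (3) every T ∈ S satisfies |T\K| ≤ s; and (4) μ(S) ≥ 1/ℓ. -/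
/-!
Let `K_s` be the set of elements of degree more than `c n^{s/ℓ}` in `T`; double counting gives
`|K_s| ≤ ℓ n^{1-s/ℓ}`. Give each `A ∈ T` the least level `s ≥ 1` with `|A \ K_s| ≤ s`
(at most `ℓ`), and let `S` be a level carrying mass at least `1/ℓ`. An element outside
`K_{s-1}` has degree at most `c n^{(s-1)/ℓ}`, while an element of `K_{s-1} \ K_s` lies in no
petal `A \ K_s` with `A ∈ S`: minimality of `s` forces `|A \ K_{s-1}| ≥ s ≥ |A \ K_s|`, so the
two petals coincide.
-/

open Finset

namespace Daisy

variable {α : Type*} [DecidableEq α]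

def degree (T : Finset (Finset α)) (u : α) : ℕ := #{A ∈ T | u ∈ A}

noncomputable def heavy [Fintype α] (T : Finset (Finset α)) (θ : ℝ) : Finset α :=
  {u | θ < degree T u}

theorem sum_degree_le_sum_card (K : Finset α) (T : Finset (Finset α)) :
    ∑ u ∈ K, degree T u ≤ ∑ A ∈ T, #A :=
  calc ∑ u ∈ K, degree T u = ∑ A ∈ T, #{u ∈ K | u ∈ A} :=
        sum_card_bipartiteAbove_eq_sum_card_bipartiteBelow (· ∈ ·)
    _ ≤ ∑ A ∈ T, #A := sum_le_sum fun _ _ => card_le_card fun _ hu => (mem_filter.1 hu).2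

section Heavy

variable [Fintype α] (T : Finset (Finset α))

theorem heavy_anti : Antitone (heavy T) := fun _ _ h _ hu => by
  simp only [heavy, mem_filter, mem_univ, true_and] at hu ⊢
  exact h.trans_lt hu

theorem card_heavy_mul_le (θ : ℝ) : #(heavy T θ) * θ ≤ ∑ A ∈ T, (#A : ℝ) :=
  calc (#(heavy T θ) : ℝ) * θ = ∑ _u ∈ heavy T θ, θ := by rw [sum_const, nsmul_eq_mul]
    _ ≤ ∑ u ∈ heavy T θ, (degree T u : ℝ) := sum_le_sum fun u hu => (mem_filter.1 hu).2.le
    _ ≤ ∑ A ∈ T, (#A : ℝ) := by exact_mod_cast sum_degree_le_sum_card _ T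

variable {T}

theorem card_heavy_le {ℓ : ℕ} (hsize : ∀ A ∈ T, #A = ℓ) {θ : ℝ} (hθ : 0 < θ) :
    (#(heavy T θ) : ℝ) ≤ ℓ * #T / θ := by
  rw [le_div_iff₀ hθ]
  refine (card_heavy_mul_le T θ).trans_eq ?_
  rw [sum_congr rfl fun A hA => by rw [hsize A hA], sum_const, nsmul_eq_mul, mul_comm]

end Heavy

theorem exists_card_sdiff_le (K : ℕ → Finset α) (A : Finset α) :
    ∃ s, 1 ≤ s ∧ #(A \ K s) ≤ s :=
  ⟨max 1 #A, le_max_left _ _, (card_le_card sdiff_subset).trans (le_max_right _ _)⟩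

def level (K : ℕ → Finset α) (A : Finset α) : ℕ := Nat.find (exists_card_sdiff_le K A)

section Level

variable {K : ℕ → Finset α} {A : Finset α} {s : ℕ} {u : α}

theorem one_le_level : 1 ≤ level K A := (Nat.find_spec (exists_card_sdiff_le K A)).1

theorem card_sdiff_level_le : #(A \ K (level K A)) ≤ level K A :=
  (Nat.find_spec (exists_card_sdiff_le K A)).2

theorem level_le (hs : 1 ≤ s) (h : #(A \ K s) ≤ s) : level K A ≤ s :=
  Nat.find_min' _ ⟨hs, h⟩

theorem sdiff_pred_level_eq (hK : Antitone K) (h : 2 ≤ level K A) :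
    A \ K (level K A - 1) = A \ K (level K A) := by
  have hmin : level K A - 1 < #(A \ K (level K A - 1)) := by
    have : ¬(1 ≤ level K A - 1 ∧ #(A \ K (level K A - 1)) ≤ level K A - 1) :=
      Nat.find_min (exists_card_sdiff_le K A) (Nat.sub_lt one_le_level one_pos)
    omega
  refine eq_of_subset_of_card_le (sdiff_subset_sdiff subset_rfl (hK (Nat.sub_le _ _))) ?_
  have := card_sdiff_level_le (K := K) (A := A)
  omega

theorem notMem_sdiff_level_of_mem (hK : Antitone K) (hu : u ∈ K (max 1 (level K A - 1))) :
    u ∉ A \ K (level K A) := by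
  obtain h | h : level K A = 1 ∨ 2 ≤ level K A := by
    have := one_le_level (K := K) (A := A)
    omega
  · rw [h] at hu ⊢
    exact fun h' => (mem_sdiff.1 h').2 hu
  · rw [max_eq_right (by omega)] at hu
    rw [← sdiff_pred_level_eq hK h]
    exact fun h' => (mem_sdiff.1 h').2 hu

end Level

theorem card_filter_level_mem_sdiff_le [Fintype α] {T : Finset (Finset α)} {θ : ℕ → ℝ}
    (hθ : Monotone θ) (hθ₀ : 0 ≤ θ 0) (s : ℕ) (u : α) :
    (#{A ∈ {A ∈ T | level (fun t => heavy T (θ t)) A = s} | u ∈ A \ heavy T (θ s)} : ℝ)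
      ≤ θ (max 1 (s - 1)) := by
  by_cases hu : u ∈ heavy T (θ (max 1 (s - 1)))
  · rw [filter_false_of_mem fun A hA => (mem_filter.1 hA).2 ▸
      notMem_sdiff_level_of_mem ((heavy_anti T).comp_monotone hθ) ((mem_filter.1 hA).2 ▸ hu)]
    simpa using hθ₀.trans (hθ (Nat.zero_le _))
  · calc _ ≤ (degree T u : ℝ) := by
          refine Nat.cast_le.2 (card_le_card fun A hA => ?_)
          simp only [mem_filter, mem_sdiff] at hA ⊢
          exact ⟨hA.1.1, hA.2.1⟩
      _ ≤ θ (max 1 (s - 1)) := by simpa [heavy] using hu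

end Daisy

open Daisy

theorem daisy_lemma_general
    (n ℓ : ℕ) (hn : 1 ≤ n) (hℓ : 1 ≤ ℓ) (c : ℝ)
    (T : Finset (Finset (Fin n)))
    (hsize : ∀ A ∈ T, A.card = ℓ)
    (hcard : (T.card : ℝ) = c * n)
    (μ : Finset (Fin n) → ℝ)
    (hμ1 : ∑ A ∈ T, μ A = 1) :
    ∃ s ∈ Finset.Icc 1 ℓ, ∃ S ⊆ T, ∃ K : Finset (Fin n),
      (∀ u : Fin n, u ∉ K →
        ((S.filter (fun A => u ∈ A \ K)).card : ℝ) ≤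
          c * (n : ℝ) ^ (((max 1 (s - 1) : ℕ) : ℝ) / (ℓ : ℝ))) ∧
      ((K.card : ℝ) ≤ (ℓ : ℝ) * (n : ℝ) ^ ((1 : ℝ) - (s : ℝ) / (ℓ : ℝ))) ∧
      (∀ A ∈ S, (A \ K).card ≤ s) ∧
      ((1 : ℝ) / (ℓ : ℝ) ≤ ∑ A ∈ S, μ A) := by
  have hn₀ : (0 : ℝ) < n := by exact_mod_cast hn
  have hc : 0 < c := by
    have hT : T.Nonempty := nonempty_of_sum_ne_zero (hμ1 ▸ one_ne_zero)
    exact pos_of_mul_pos_left (hcard ▸ Nat.cast_pos.2 hT.card_pos) hn₀.le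
  set θ : ℕ → ℝ := fun s => c * (n : ℝ) ^ ((s : ℝ) / ℓ)
  have hθ : Monotone θ := fun s t h => by
    dsimp only [θ]
    gcongr
    exact_mod_cast hn
  obtain ⟨s, hs, hmass⟩ := exists_le_sum_fiber_of_maps_to_of_nsmul_le_sum
    (f := level fun t => heavy T (θ t)) (w := μ) (b := 1 / ℓ)
    (fun A hA => mem_Icc.2 ⟨one_le_level, level_le hℓ ((card_le_card sdiff_subset).trans
      (hsize A hA).le)⟩)
    ⟨1, mem_Icc.2 ⟨le_rfl, hℓ⟩⟩ (by
      rw [Nat.card_Icc, add_tsub_cancel_right, nsmul_eq_mul, mul_one_div_cancel (by positivity),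
        hμ1])
  refine ⟨s, hs, _, filter_subset _ T, heavy T (θ s),
    fun u _ => card_filter_level_mem_sdiff_le hθ (by simpa [θ] using hc.le) s u, ?_, ?_, hmass⟩
  · calc (#(heavy T (θ s)) : ℝ) ≤ ℓ * #T / θ s := card_heavy_le hsize (by positivity)
      _ = ℓ * n ^ (1 - s / ℓ : ℝ) := by
        dsimp only [θ]
        rw [hcard, Real.rpow_sub hn₀, Real.rpow_one]
        field_simp
  · intro A hA
    rw [← (mem_filter.1 hA).2]
    exact card_sdiff_level_le (K := fun t => heavy T (θ t))

/-- the daisy lemma. -/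
theorem daisy_lemma
    (n ℓ : ℕ) (hn : 1 ≤ n) (hℓ : 1 ≤ ℓ) (c : ℝ)
    (T : Finset (Finset (Fin n)))
    (hsize : ∀ A ∈ T, A.card = ℓ)
    (hcard : (T.card : ℝ) = c * n)
    (μ : Finset (Fin n) → ℝ)
    (hμ0 : ∀ A, 0 ≤ μ A)
    (hsupp : ∀ A, 0 < μ A ↔ A ∈ T)
    (hμ1 : ∑ A ∈ T, μ A = 1) :
    ∃ s ∈ Finset.Icc 1 ℓ, ∃ S ⊆ T, ∃ K : Finset (Fin n),
      (∀ u : Fin n, u ∉ K →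
        ((S.filter (fun A => u ∈ A \ K)).card : ℝ) ≤
          c * (n : ℝ) ^ (((max 1 (s - 1) : ℕ) : ℝ) / (ℓ : ℝ))) ∧
      ((K.card : ℝ) ≤ (ℓ : ℝ) * (n : ℝ) ^ ((1 : ℝ) - (s : ℝ) / (ℓ : ℝ))) ∧
      (∀ A ∈ S, (A \ K).card ≤ s) ∧
      ((1 : ℝ) / (ℓ : ℝ) ≤ ∑ A ∈ S, μ A) :=
  daisy_lemma_general n ℓ hn hℓ c T hsize hcard μ hμ1
end

section
/- In the iterative construction where T₁ = T is a collection of c·n subsets of [n] of size ℓ each, and for each i ∈ [ℓ] one defines K_i = {j ∈ [n] : deg_{T_i}(j) > c·n^{i/ℓ}}, S_i = {T ∈ T_i : |T\K_i| ≤ i}, and T_{i+1} = T_i \ S_i, it holds for every i ∈ [ℓ] that |K_i| < ℓ·n^{1−i/ℓ}. -/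
/-- kernel size bound in the iterative daisy construction. -/
theorem iterative_daisy_kernel_bound
    (n ℓ : ℕ) (hn : 1 ≤ n) (hℓ : 1 ≤ ℓ) (c : ℝ) (hc : 0 < c)
    (Tfam : ℕ → Finset (Finset (Fin n)))
    (Kfam : ℕ → Finset (Fin n))
    (Sfam : ℕ → Finset (Finset (Fin n)))
    (hsize : ∀ A ∈ Tfam 1, A.card = ℓ)
    (hcard : ((Tfam 1).card : ℝ) = c * n)
    (hK : ∀ i ∈ Finset.Icc 1 ℓ, Kfam i =
      Finset.univ.filter (fun j : Fin n =>
        c * (n : ℝ) ^ ((i : ℝ) / (ℓ : ℝ)) < (((Tfam i).filter (fun A => j ∈ A)).card : ℝ)))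
    (hS : ∀ i ∈ Finset.Icc 1 ℓ, Sfam i = (Tfam i).filter (fun A => (A \ Kfam i).card ≤ i))
    (hT : ∀ i ∈ Finset.Icc 1 ℓ, Tfam (i + 1) = Tfam i \ Sfam i) :
    ∀ i ∈ Finset.Icc 1 ℓ,
      ((Kfam i).card : ℝ) < (ℓ : ℝ) * (n : ℝ) ^ ((1 : ℝ) - (i : ℝ) / (ℓ : ℝ)) := by
  have hn0 : (0 : ℝ) < n := by exact_mod_cast hn
  have hsub : ∀ i, 1 ≤ i → i ≤ ℓ → Tfam i ⊆ Tfam 1 := by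
    intro i
    induction i with
    | zero => omega
    | succ k ih =>
      intro h1 h2
      rcases Nat.eq_or_lt_of_le h1 with h | h
      · have hk0 : k = 0 := by omega
        subst hk0; exact subset_rfl
      · have hk1 : 1 ≤ k := by omega
        have hkℓ : k ≤ ℓ := by omega
        rw [hT k (Finset.mem_Icc.mpr ⟨hk1, hkℓ⟩)]
        exact Finset.sdiff_subset.trans (ih hk1 hkℓ)
  intro i hiI
  have hi := Finset.mem_Icc.mp hiI
  have hthr : 0 < c * (n : ℝ) ^ ((i : ℝ) / (ℓ : ℝ)) :=
    mul_pos hc (Real.rpow_pos_of_pos hn0 _)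
  have hRHSpos : 0 < (ℓ : ℝ) * (n : ℝ) ^ ((1 : ℝ) - (i : ℝ) / (ℓ : ℝ)) :=
    mul_pos (by exact_mod_cast hℓ) (Real.rpow_pos_of_pos hn0 _)
  rcases (Kfam i).eq_empty_or_nonempty with he | hne
  · simpa [he] using hRHSpos
  · set D : Fin n → ℕ := fun j => ((Tfam i).filter (fun A => j ∈ A)).card with hD
    have hdeg : ∀ j ∈ Kfam i, c * (n : ℝ) ^ ((i : ℝ) / (ℓ : ℝ)) < (D j : ℝ) := by
      intro j hj
      rw [hK i hiI] at hj
      exact (Finset.mem_filter.mp hj).2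
    have hsum1 : ((Kfam i).card : ℝ) * (c * (n : ℝ) ^ ((i : ℝ) / (ℓ : ℝ))) <
        ∑ j ∈ Kfam i, (D j : ℝ) := by
      have := Finset.sum_lt_sum_of_nonempty hne hdeg
      simpa [Finset.sum_const, nsmul_eq_mul] using this
    have hsum2 : ∑ j ∈ Kfam i, (D j : ℝ) ≤ ∑ j : Fin n, (D j : ℝ) :=
      Finset.sum_le_sum_of_subset_of_nonneg (Finset.subset_univ _)
        (by intros; positivity)
    have hswapN : ∑ j : Fin n, D j = ∑ A ∈ Tfam i, A.card := by
      simp only [hD, Finset.card_filter]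
      rw [Finset.sum_comm]
      simp [Finset.sum_ite_mem]
    have hcards : ∑ A ∈ Tfam i, A.card = ℓ * (Tfam i).card := by
      rw [Finset.sum_congr rfl (fun A hA => hsize A (hsub i hi.1 hi.2 hA)),
        Finset.sum_const, smul_eq_mul, mul_comm]
    have hTi : ((Tfam i).card : ℝ) ≤ c * n := by
      rw [← hcard]
      exact_mod_cast Finset.card_le_card (hsub i hi.1 hi.2)
    have hpow : (n : ℝ) ^ ((1 : ℝ) - (i : ℝ) / (ℓ : ℝ)) * (n : ℝ) ^ ((i : ℝ) / (ℓ : ℝ))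
        = (n : ℝ) := by
      rw [← Real.rpow_add hn0, sub_add_cancel, Real.rpow_one]
    have key : ((Kfam i).card : ℝ) * (c * (n : ℝ) ^ ((i : ℝ) / (ℓ : ℝ))) <
        ((ℓ : ℝ) * (n : ℝ) ^ ((1 : ℝ) - (i : ℝ) / (ℓ : ℝ))) *
          (c * (n : ℝ) ^ ((i : ℝ) / (ℓ : ℝ))) := by
      calc ((Kfam i).card : ℝ) * (c * (n : ℝ) ^ ((i : ℝ) / (ℓ : ℝ)))
          < ∑ j ∈ Kfam i, (D j : ℝ) := hsum1
        _ ≤ ∑ j : Fin n, (D j : ℝ) := hsum2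
        _ = (ℓ : ℝ) * ((Tfam i).card : ℝ) := by
            rw [← Nat.cast_sum, hswapN, hcards]; push_cast; ring
        _ ≤ (ℓ : ℝ) * (c * n) := by
            exact mul_le_mul_of_nonneg_left hTi (by positivity)
        _ = ((ℓ : ℝ) * (n : ℝ) ^ ((1 : ℝ) - (i : ℝ) / (ℓ : ℝ))) *
              (c * (n : ℝ) ^ ((i : ℝ) / (ℓ : ℝ))) := by
            rw [show ((ℓ : ℝ) * (n : ℝ) ^ ((1 : ℝ) - (i : ℝ) / (ℓ : ℝ))) *
                (c * (n : ℝ) ^ ((i : ℝ) / (ℓ : ℝ))) =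
                (ℓ : ℝ) * c * ((n : ℝ) ^ ((1 : ℝ) - (i : ℝ) / (ℓ : ℝ)) *
                  (n : ℝ) ^ ((i : ℝ) / (ℓ : ℝ))) by ring, hpow]; ring
    exact lt_of_mul_lt_mul_right key hthr.le
end

section
/- In the iterative daisy construction (T₁ = T of size c·n with sets of size ℓ; K_i = {j : deg_{T_i}(j) > c·n^{i/ℓ}}; S_i = {T ∈ T_i : |T\K_i| ≤ i}; T_{i+1} = T_i \ S_i), for every i ∈ [ℓ] and every j ∈ [n]\K_i it holds that deg_{S_i}(j) ≤ c·n^{max{1, i−1}/ℓ}. -/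
/-!
A set `A ∈ S_i` lies in `T_i`, so it was not removed at step `i - 1`: `|A \ K_{i-1}| ≥ i`. Since the
thresholds grow with `i` while the families shrink, `K_i ⊆ K_{i-1}`, so `A \ K_{i-1} ⊆ A \ K_i`, and
`|A \ K_i| ≤ i` forces equality. Hence a vertex `j ∉ K_i` lying in some `A ∈ S_i` is not in `K_{i-1}`
either, and its degree in `S_i ⊆ T_{i-1}` is at most the threshold `c·n^{(i-1)/ℓ}` of step `i - 1`.
-/

open Finset

variable {α : Type*} [DecidableEq α]

lemma filter_lt_card_filter_mem_subset [Fintype α] {𝒜 ℬ : Finset (Finset α)} {s t : ℝ} (h𝒜ℬ : 𝒜 ⊆ ℬ)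
    (hts : t ≤ s) :
    univ.filter (fun j => s < (#(𝒜.filter (fun A => j ∈ A)) : ℝ)) ⊆
      univ.filter (fun j => t < (#(ℬ.filter (fun A => j ∈ A)) : ℝ)) := by
  intro j
  simp only [mem_filter, mem_univ, true_and]
  intro hj
  have : #(𝒜.filter (fun A => j ∈ A)) ≤ #(ℬ.filter (fun A => j ∈ A)) :=
    card_le_card (filter_subset_filter _ h𝒜ℬ)
  exact hts.trans_lt (hj.trans_le (by exact_mod_cast this))

lemma card_filter_mem_le_of_notMem_filter [Fintype α] {𝒜 : Finset (Finset α)} {b : ℝ} {j : α}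
    (hj : j ∉ univ.filter (fun j => b < (#(𝒜.filter (fun A => j ∈ A)) : ℝ))) :
    (#(𝒜.filter (fun A => j ∈ A)) : ℝ) ≤ b := by
  simpa using hj

lemma notMem_of_card_sdiff_le_card_sdiff {A K K' : Finset α} (hKK' : K ⊆ K')
    (hcard : #(A \ K) ≤ #(A \ K')) {j : α} (hjA : j ∈ A) (hjK : j ∉ K) : j ∉ K' := by
  have hsdiff : A \ K' = A \ K := eq_of_subset_of_card_le (sdiff_subset_sdiff le_rfl hKK') hcard
  have : j ∈ A \ K' := hsdiff ▸ mem_sdiff.mpr ⟨hjA, hjK⟩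
  exact (mem_sdiff.mp this).2

/-- One step of the construction: `T` and `K` are the family and kernel of step `k`, the sets of
`T` with at most `k` vertices outside `K` are removed, and `K' ⊆ K` is the next kernel. -/
lemma card_filter_mem_next_stage_le {T : Finset (Finset α)} {K K' : Finset α} {k : ℕ} {b : ℝ}
    (hb : 0 ≤ b) (hTK : ∀ j ∉ K, (#(T.filter (fun A => j ∈ A)) : ℝ) ≤ b) (hK'K : K' ⊆ K)
    {j : α} (hj : j ∉ K') :
    (#(((T \ T.filter (fun A => #(A \ K) ≤ k)).filter (fun A => #(A \ K') ≤ k + 1)).filter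
      (fun A => j ∈ A)) : ℝ) ≤ b := by
  set S' := ((T \ T.filter (fun A => #(A \ K) ≤ k)).filter (fun A => #(A \ K') ≤ k + 1)).filter
    (fun A => j ∈ A)
  obtain hempty | ⟨A, hA⟩ := S'.eq_empty_or_nonempty
  · simpa [hempty] using hb
  have hS'T : S' ⊆ T.filter (fun A => j ∈ A) :=
    filter_subset_filter _ ((filter_subset _ _).trans sdiff_subset)
  simp only [S', mem_filter, mem_sdiff, not_and, not_le] at hA
  obtain ⟨⟨⟨hAT, hAkept⟩, hAsmall⟩, hjA⟩ := hA
  have hjK : j ∉ K := notMem_of_card_sdiff_le_card_sdiff hK'K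
    (hAsmall.trans (hAkept hAT)) hjA hj
  exact (Nat.cast_le.mpr (card_le_card hS'T)).trans (hTK j hjK)

theorem iterative_daisy_degree_bound_general
    (n ℓ : ℕ) (c : ℝ)
    (Tfam : ℕ → Finset (Finset (Fin n)))
    (Kfam : ℕ → Finset (Fin n))
    (Sfam : ℕ → Finset (Finset (Fin n)))
    (hcard : ((Tfam 1).card : ℝ) = c * n)
    (hK : ∀ i ∈ Finset.Icc 1 ℓ, Kfam i =
      Finset.univ.filter (fun j : Fin n =>
        c * (n : ℝ) ^ ((i : ℝ) / (ℓ : ℝ)) < (((Tfam i).filter (fun A => j ∈ A)).card : ℝ)))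
    (hS : ∀ i ∈ Finset.Icc 1 ℓ, Sfam i = (Tfam i).filter (fun A => (A \ Kfam i).card ≤ i))
    (hT : ∀ i ∈ Finset.Icc 1 ℓ, Tfam (i + 1) = Tfam i \ Sfam i) :
    ∀ i ∈ Finset.Icc 1 ℓ, ∀ j : Fin n, j ∉ Kfam i →
      (((Sfam i).filter (fun A => j ∈ A)).card : ℝ) ≤
        c * (n : ℝ) ^ (((max 1 (i - 1) : ℕ) : ℝ) / (ℓ : ℝ)) := by
  intro i hi j hj
  have hn : (1 : ℝ) ≤ n := by exact_mod_cast j.pos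
  have hc : 0 ≤ c :=
    (mul_nonneg_iff_of_pos_right (by linarith)).mp (hcard ▸ Nat.cast_nonneg _)
  obtain ⟨hi1, hiℓ⟩ := mem_Icc.mp hi
  obtain _ | k := i
  · omega
  obtain rfl | hk := k.eq_zero_or_pos
  · refine le_trans ?_ (card_filter_mem_le_of_notMem_filter (hK 1 hi ▸ hj))
    exact_mod_cast card_le_card (filter_subset_filter _ (hS 1 hi ▸ filter_subset _ _))
  have hkIcc : k ∈ Icc 1 ℓ := mem_Icc.mpr ⟨hk, by omega⟩
  rw [show max 1 (k + 1 - 1) = k by omega, hS _ hi, hT k hkIcc, hS k hkIcc]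
  refine card_filter_mem_next_stage_le (by positivity)
    (fun j hj => card_filter_mem_le_of_notMem_filter (hK k hkIcc ▸ hj)) ?_ hj
  rw [hK _ hi, hK k hkIcc, hT k hkIcc]
  refine filter_lt_card_filter_mem_subset sdiff_subset ?_
  gcongr
  omega

/-- degree bound outside the kernel in the iterative daisy construction. -/
theorem iterative_daisy_degree_bound
    (n ℓ : ℕ) (hℓ : 1 ≤ ℓ) (c : ℝ)
    (Tfam : ℕ → Finset (Finset (Fin n)))
    (Kfam : ℕ → Finset (Fin n))
    (Sfam : ℕ → Finset (Finset (Fin n)))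
    (hsize : ∀ A ∈ Tfam 1, A.card = ℓ)
    (hcard : ((Tfam 1).card : ℝ) = c * n)
    (hK : ∀ i ∈ Finset.Icc 1 ℓ, Kfam i =
      Finset.univ.filter (fun j : Fin n =>
        c * (n : ℝ) ^ ((i : ℝ) / (ℓ : ℝ)) < (((Tfam i).filter (fun A => j ∈ A)).card : ℝ)))
    (hS : ∀ i ∈ Finset.Icc 1 ℓ, Sfam i = (Tfam i).filter (fun A => (A \ Kfam i).card ≤ i))
    (hT : ∀ i ∈ Finset.Icc 1 ℓ, Tfam (i + 1) = Tfam i \ Sfam i) :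
    ∀ i ∈ Finset.Icc 1 ℓ, ∀ j : Fin n, j ∉ Kfam i →
      (((Sfam i).filter (fun A => j ∈ A)).card : ℝ) ≤
        c * (n : ℝ) ^ (((max 1 (i - 1) : ℕ) : ℝ) / (ℓ : ℝ)) :=
  iterative_daisy_degree_bound_general n ℓ c Tfam Kfam Sfam hcard hK hS hT
end

section
/- Let μ be a distribution over ℓ-element subsets of [n] representing the query distribution of a non-adaptive relaxed decoder D(i) with soundness error ε and decoding radius δ for a code C, where some two codewords C(x), C(y) with x_i ≠ y_i exist. If G ⊆ supp(μ) is a family of query sets with μ(G) > ε, then the union of the sets in G has cardinality greater than δ·n. -/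
/-! If the query sets in `G` covered at most `δ·n` coordinates, take two messages `x`, `y` with
`x i ≠ y i` and splice `C x` into `C y` on the covered coordinates. The result is `δ`-close to
`C y`, yet every query set in `G` sees only `C x` there, so by locality and perfect completeness
the decoder answers `x i` on all of `G`. Its probability of answering `y i` or `⊥` is then at most
`1 - μ(G) < 1 - ε`, contradicting soundness. -/

open Finset

lemma card_filter_piecewise_ne_le {α β : Type*} [Fintype α] [DecidableEq α] [DecidableEq β]
    (s : Finset α) (f g : α → β) :
    #{j | s.piecewise f g j ≠ g j} ≤ #s :=
  card_le_card fun j hj => by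
    by_contra hjs
    exact (mem_filter.mp hj).2 (s.piecewise_eq_of_notMem f g hjs)

lemma sum_filter_le_sum_sub_of_forall_not {ι : Type*} [DecidableEq ι] {F G : Finset ι}
    (p : ι → Prop) [DecidablePred p] (μ : ι → ℝ) (hμ0 : ∀ I ∈ F, 0 ≤ μ I) (hG : G ⊆ F)
    (hp : ∀ I ∈ G, ¬ p I) :
    ∑ I ∈ F.filter p, μ I ≤ ∑ I ∈ F, μ I - ∑ I ∈ G, μ I := by
  have hsub : F.filter p ⊆ F \ G := fun I hI =>
    mem_sdiff.mpr ⟨(mem_filter.mp hI).1, fun hIG => hp I hIG (mem_filter.mp hI).2⟩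
  calc ∑ I ∈ F.filter p, μ I ≤ ∑ I ∈ F \ G, μ I :=
        sum_le_sum_of_subset_of_nonneg hsub fun I hI _ => hμ0 I (mem_sdiff.mp hI).1
    _ = ∑ I ∈ F, μ I - ∑ I ∈ G, μ I := sum_sdiff_eq_sub hG

theorem heavy_family_covers_much_general
    (k n : ℕ) (i : Fin k) (δ ε : ℝ)
    (C : (Fin k → Bool) → (Fin n → Bool))
    (F : Finset (Finset (Fin n)))
    (μ : Finset (Fin n) → ℝ)
    (hμ0 : ∀ I, 0 ≤ μ I)
    (hμ1 : ∑ I ∈ F, μ I = 1)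
    (f : Finset (Fin n) → (Fin n → Bool) → Option Bool)
    (hlocal : ∀ (I : Finset (Fin n)) (w w' : Fin n → Bool),
      (∀ j ∈ I, w j = w' j) → f I w = f I w')
    (hcomplete : ∀ x : Fin k → Bool, ∀ I ∈ F, f I (C x) = some (x i))
    (hsound : ∀ (w : Fin n → Bool) (x : Fin k → Bool),
      ((Finset.univ.filter (fun j : Fin n => w j ≠ C x j)).card : ℝ) ≤ δ * n →
      1 - ε ≤ ∑ I ∈ F.filter (fun I => f I w = some (x i) ∨ f I w = none), μ I)
    (G : Finset (Finset (Fin n))) (hG : G ⊆ F)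
    (hGheavy : ε < ∑ I ∈ G, μ I) :
    δ * n < ((G.biUnion id).card : ℝ) := by
  by_contra! hle
  set U := G.biUnion id
  set w := U.piecewise (C fun _ => true) (C fun _ => false)
  have hclose : (#{j | w j ≠ C (fun _ => false) j} : ℝ) ≤ δ * n :=
    le_trans (by exact_mod_cast card_filter_piecewise_ne_le U _ _) hle
  have hdecodes_true : ∀ I ∈ G, f I w = some true := fun I hI =>
    (hlocal I w _ fun j hj => U.piecewise_eq_of_mem _ _ (mem_biUnion.mpr ⟨I, hI, hj⟩)).trans
      (hcomplete _ I (hG hI))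
  have hfail := sum_filter_le_sum_sub_of_forall_not (fun I => f I w = some false ∨ f I w = none)
    μ (fun I _ => hμ0 I) hG fun I hI => by simp [hdecodes_true I hI]
  linarith [hsound w (fun _ => false) hclose]

/-- for a non-adaptive relaxed decoder D(i) = f_I(w|_I), I ~ μ, with
perfect completeness, soundness error ε and decoding radius δ, any family G of query
sets with μ(G) > ε must cover more than δ·n coordinates. -/
theorem heavy_family_covers_much
    (k n ℓ : ℕ) (i : Fin k) (δ ε : ℝ)
    (C : (Fin k → Bool) → (Fin n → Bool))
    (F : Finset (Finset (Fin n)))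
    (hsz : ∀ I ∈ F, I.card = ℓ)
    (μ : Finset (Fin n) → ℝ)
    (hμ0 : ∀ I, 0 ≤ μ I)
    (hμ1 : ∑ I ∈ F, μ I = 1)
    (f : Finset (Fin n) → (Fin n → Bool) → Option Bool)
    (hlocal : ∀ (I : Finset (Fin n)) (w w' : Fin n → Bool),
      (∀ j ∈ I, w j = w' j) → f I w = f I w')
    (hcomplete : ∀ x : Fin k → Bool, ∀ I ∈ F, f I (C x) = some (x i))
    (hsound : ∀ (w : Fin n → Bool) (x : Fin k → Bool),
      ((Finset.univ.filter (fun j : Fin n => w j ≠ C x j)).card : ℝ) ≤ δ * n →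
      1 - ε ≤ ∑ I ∈ F.filter (fun I => f I w = some (x i) ∨ f I w = none), μ I)
    (G : Finset (Finset (Fin n))) (hG : G ⊆ F)
    (hGheavy : ε < ∑ I ∈ G, μ I) :
    δ * n < ((G.biUnion id).card : ℝ) :=
  heavy_family_covers_much_general k n i δ ε C F μ hμ0 hμ1 f hlocal hcomplete hsound G hG hGheavy
end
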